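/- arXiv:2509.01709 — 3 statements merged into one kernel-verified Lean document; each statement's English description precedes it below -/
import Mathlib

section
/- Let A be a closed subalgebra of a unital Banach algebra B containing the unit, and x ∈ A. Then σ_B(x) ⊆ σ_A(x), and the boundary (frontier) of σ_A(x) is contained in σ_B(x). -/
/-- For `A` a closed subalgebra of a unital Banach algebra `B`
(via an isometric unital algebra embedding `ι`) and `x ∈ A`, one has
`σ_B(x) ⊆ σ_A(x)` and `∂(σ_A(x)) ⊆ σ_B(x)`. -/
theorem spectrum_subset_and_frontier_subset {A : Type*} {B : Type*}
    [NormedRing A] [NormedAlgebra ℂ A] [CompleteSpace A]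
    [NormedRing B] [NormedAlgebra ℂ B] [CompleteSpace B]
    (ι : A →ₐ[ℂ] B) (hι : Isometry ι) (x : A) :
    spectrum ℂ (ι x) ⊆ spectrum ℂ x ∧
      frontier (spectrum ℂ x) ⊆ spectrum ℂ (ι x) := by
  refine ⟨AlgHom.spectrum_apply_subset ι x, ?_⟩
  have hclosed : IsClosed ((ι.range : Subalgebra ℂ B) : Set B) := by
    simpa [AlgHom.coe_range] using hι.isClosedEmbedding.isClosed_range
  have h := Subalgebra.frontier_spectrum (hS := hclosed) ι.range
    (AlgEquiv.ofInjective ι hι.injective x)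
  rw [AlgEquiv.spectrum_eq (AlgEquiv.ofInjective ι hι.injective) x,
    AlgEquiv.ofInjective_apply] at h
  exact h
end

section
/- The cortex of a commutative unital Banach algebra A (the set of multiplicative linear functionals on A that extend to every commutative unital Banach superalgebra containing A as a closed subalgebra with the same unit) is a closed subset of the Gelfand space Δ(A) in the weak* topology. -/
open WeakDual

universe u

/-- The cortex of a commutative unital Banach algebra `A`: the set of characters that
extend to every commutative unital Banach algebra containing `A` isometrically as a
closed subalgebra with the same unit. -/
def cortex (A : Type u) [NormedCommRing A] [NormedAlgebra ℂ A] [CompleteSpace A] :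
    Set (characterSpace ℂ A) :=
  {φ | ∀ (B : Type u) [NormedCommRing B] [NormedAlgebra ℂ B] [CompleteSpace B]
      (ι : A →ₐ[ℂ] B), Isometry ι →
        ∃ ψ : characterSpace ℂ B, ∀ a : A, ψ (ι a) = φ a}

/-- Auxiliary structure bundling a Banach superalgebra datum. -/
structure CortexExt (A : Type u) [NormedCommRing A] [NormedAlgebra ℂ A] : Type (u + 1) where
  B : Type u
  [ringB : NormedCommRing B]
  [algB : NormedAlgebra ℂ B]
  [complB : CompleteSpace B]
  ι : A →ₐ[ℂ] B
  isom : Isometry ι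

attribute [instance] CortexExt.ringB CortexExt.algB CortexExt.complB

variable {A : Type u} [NormedCommRing A] [NormedAlgebra ℂ A] [CompleteSpace A]

/-- Restriction of a character of `e.B` to `A`. -/
noncomputable def CortexExt.restrict (e : CortexExt A) (ψ : characterSpace ℂ e.B) :
    characterSpace ℂ A := by
  refine ⟨(CharacterSpace.toCLM ψ).comp ⟨e.ι.toLinearMap, e.isom.continuous⟩, ?_, ?_⟩
  · intro h
    have h1 : ψ (e.ι 1) = 0 := congrFun (congrArg DFunLike.coe h) 1
    rw [map_one, map_one] at h1
    exact one_ne_zero h1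
  · intro x y
    show ψ (e.ι (x * y)) = ψ (e.ι x) * ψ (e.ι y)
    rw [map_mul, map_mul]

lemma CortexExt.restrict_apply (e : CortexExt A) (ψ : characterSpace ℂ e.B) (a : A) :
    e.restrict ψ a = ψ (e.ι a) := rfl

lemma CortexExt.continuous_restrict (e : CortexExt A) : Continuous e.restrict := by
  apply Continuous.subtype_mk
  apply WeakDual.continuous_of_continuous_eval
  intro a
  exact (WeakDual.eval_continuous (e.ι a)).comp continuous_subtype_val

lemma CortexExt.isClosed_range_restrict (e : CortexExt A) :
    IsClosed (Set.range e.restrict) :=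
  (isCompact_range e.continuous_restrict).isClosed

lemma cortex_eq_iInter :
    cortex A = ⋂ e : CortexExt A, Set.range e.restrict := by
  ext φ
  simp only [Set.mem_iInter, Set.mem_range, cortex, Set.mem_setOf_eq]
  constructor
  · rintro h e
    obtain ⟨ψ, hψ⟩ := h e.B e.ι e.isom
    exact ⟨ψ, by ext a; rw [CortexExt.restrict_apply]; exact hψ a⟩
  · intro h B _ _ _ ι hι
    obtain ⟨ψ, hψ⟩ := h ⟨B, ι, hι⟩
    exact ⟨ψ, fun a => by rw [← hψ]; rfl⟩

/-- The cortex is a closed subset of the Gelfand space (character space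
with its weak* topology). -/
theorem isClosed_cortex (A : Type u) [NormedCommRing A] [NormedAlgebra ℂ A]
    [CompleteSpace A] : IsClosed (cortex A) := by
  rw [cortex_eq_iInter]
  exact isClosed_iInter fun e => e.isClosed_range_restrict
end

section
/- Let A be a commutative unital complex Banach algebra and let M ⊆ A be a subset consisting of joint topological divisors of zero. Then the closed ideal generated by M also consists of joint topological divisors of zero. -/
/-- A subset `S` of a commutative normed ring consists of joint topological divisors of
zero if for every finite tuple `x₁, …, xₙ` from `S` we have
`inf { Σⱼ ‖xⱼ y‖ : y ∈ A, ‖y‖ = 1 } = 0`. -/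
def ConsistsOfJointTDZ {A : Type*} [NormedRing A] (S : Set A) : Prop :=
  ∀ (n : ℕ) (x : Fin n → A), (∀ i, x i ∈ S) →
    sInf {r : ℝ | ∃ y : A, ‖y‖ = 1 ∧ r = ∑ i, ‖x i * y‖} = 0

/-- If `M` consists of joint topological divisors of zero, then so does the
closed ideal generated by `M`. -/
theorem closedIdeal_consistsOfJointTDZ {A : Type*}
    [NormedCommRing A] [NormedAlgebra ℂ A] [CompleteSpace A]
    (M : Set A) (hM : ConsistsOfJointTDZ M) :
    ConsistsOfJointTDZ (closure ((Ideal.span M : Ideal A) : Set A)) := by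
  intro n x hx
  set T := {r : ℝ | ∃ y : A, ‖y‖ = 1 ∧ r = ∑ i, ‖x i * y‖} with hT
  by_cases hyex : ∃ y : A, ‖y‖ = 1
  swap
  · have hTe : T = ∅ := by
      ext r
      simp only [hT, Set.mem_setOf_eq, Set.mem_empty_iff_false, iff_false]
      rintro ⟨y, hy1, -⟩
      exact hyex ⟨y, hy1⟩
    rw [hTe]
    exact Real.sInf_empty
  obtain ⟨y₀, hy₀⟩ := hyex
  have hTne : T.Nonempty := ⟨_, y₀, hy₀, rfl⟩
  have hTbdd : ∀ r ∈ T, (0 : ℝ) ≤ r := by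
    rintro r ⟨y, -, rfl⟩
    exact Finset.sum_nonneg fun i _ => norm_nonneg _
  have hTbddBelow : BddBelow T := ⟨0, fun r hr => hTbdd r hr⟩
  -- key claim: for all ε > 0 there is an element of T below ε
  have key : ∀ ε : ℝ, 0 < ε → ∃ r ∈ T, r < ε := by
    intro ε hε
    -- approximate each x i by an element of the span
    have hz : ∀ i, ∃ z ∈ (Ideal.span M : Ideal A), ‖x i - z‖ < ε / (2 * (n + 1)) := by
      intro i
      have hxi := hx i
      rw [Metric.mem_closure_iff] at hxi
      obtain ⟨z, hz, hdist⟩ := hxi (ε / (2 * (n + 1))) (by positivity)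
      exact ⟨z, hz, by rwa [dist_eq_norm] at hdist⟩
    choose z hzmem hzlt using hz
    have hrep : ∀ i, ∃ c : A →₀ A, ↑c.support ⊆ M ∧ (c.sum fun m r => r • m) = z i := by
      intro i
      have := hzmem i
      rwa [Ideal.span, Submodule.mem_span_set] at this
    choose c hcsupp hcsum using hrep
    classical
    set s : Finset A := Finset.univ.biUnion fun i => (c i).support with hs
    have hsM : ∀ m ∈ s, m ∈ M := by
      intro m hm
      simp only [hs, Finset.mem_biUnion] at hm
      obtain ⟨i, -, hm⟩ := hm
      exact hcsupp i hm
    have hsubs : ∀ i, (c i).support ⊆ s := by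
      intro i m hm
      simp only [hs, Finset.mem_biUnion]
      exact ⟨i, Finset.mem_univ i, hm⟩
    set C : ℝ := ∑ i, ∑ m ∈ (c i).support, ‖c i m‖ with hC
    have hC0 : (0 : ℝ) ≤ C :=
      Finset.sum_nonneg fun i _ => Finset.sum_nonneg fun m _ => norm_nonneg _
    set δ : ℝ := ε / (2 * (C + 1)) with hδ
    have hδ0 : 0 < δ := by positivity
    -- get y from hM applied to an enumeration of s
    obtain ⟨y, hy1, hysmall⟩ : ∃ y : A, ‖y‖ = 1 ∧ ∑ m ∈ s, ‖m * y‖ < δ := by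
      classical
      let e : ↥s ≃ Fin (Fintype.card ↥s) := Fintype.equivFin ↥s
      have h0 := hM (Fintype.card ↥s) (fun j => (e.symm j : A))
        (fun j => hsM _ (e.symm j).2)
      set S' := {r : ℝ | ∃ y : A, ‖y‖ = 1 ∧ r = ∑ j, ‖(e.symm j : A) * y‖} with hS'
      have hS'ne : S'.Nonempty := ⟨_, y₀, hy₀, rfl⟩
      have hS'bdd : BddBelow S' := by
        refine ⟨0, ?_⟩
        rintro r ⟨y, -, rfl⟩
        exact Finset.sum_nonneg fun j _ => norm_nonneg _
      have hlt : sInf S' < δ := by rw [h0]; exact hδ0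
      obtain ⟨r, ⟨y, hy1, rfl⟩, hrδ⟩ := (csInf_lt_iff hS'bdd hS'ne).mp hlt
      refine ⟨y, hy1, ?_⟩
      calc ∑ m ∈ s, ‖m * y‖ = ∑ a : ↥s, ‖(a : A) * y‖ := (Finset.sum_coe_sort s _).symm
        _ = ∑ j, ‖(e.symm j : A) * y‖ := (Equiv.sum_comp e.symm _).symm
        _ < δ := hrδ
    have hmy : ∀ m ∈ s, ‖m * y‖ ≤ δ := by
      intro m hm
      calc ‖m * y‖ ≤ ∑ m ∈ s, ‖m * y‖ :=
            Finset.single_le_sum (fun m _ => norm_nonneg (m * y)) hm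
        _ ≤ δ := le_of_lt hysmall
    refine ⟨∑ i, ‖x i * y‖, ⟨y, hy1, rfl⟩, ?_⟩
    have step : ∀ i, ‖x i * y‖ ≤ ε / (2 * (n + 1)) + ∑ m ∈ (c i).support, ‖c i m‖ * δ := by
      intro i
      have h1 : ‖x i * y‖ ≤ ‖(x i - z i) * y‖ + ‖z i * y‖ := by
        have : x i * y = (x i - z i) * y + z i * y := by ring
        rw [this]; exact norm_add_le _ _
      have h2 : ‖(x i - z i) * y‖ ≤ ε / (2 * (n + 1)) := by
        calc ‖(x i - z i) * y‖ ≤ ‖x i - z i‖ * ‖y‖ := norm_mul_le _ _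
          _ = ‖x i - z i‖ := by rw [hy1, mul_one]
          _ ≤ ε / (2 * (n + 1)) := le_of_lt (hzlt i)
      have h3 : ‖z i * y‖ ≤ ∑ m ∈ (c i).support, ‖c i m‖ * δ := by
        have hzi : z i = ∑ m ∈ (c i).support, c i m * m := by
          rw [← hcsum i]; rfl
        calc ‖z i * y‖ = ‖∑ m ∈ (c i).support, c i m * m * y‖ := by
              rw [hzi, Finset.sum_mul]
          _ ≤ ∑ m ∈ (c i).support, ‖c i m * m * y‖ := norm_sum_le _ _
          _ ≤ ∑ m ∈ (c i).support, ‖c i m‖ * δ := by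
              refine Finset.sum_le_sum fun m hm => ?_
              calc ‖c i m * m * y‖ = ‖c i m * (m * y)‖ := by rw [mul_assoc]
                _ ≤ ‖c i m‖ * ‖m * y‖ := norm_mul_le _ _
                _ ≤ ‖c i m‖ * δ :=
                    mul_le_mul_of_nonneg_left (hmy m (hsubs i hm)) (norm_nonneg _)
      linarith
    calc ∑ i, ‖x i * y‖
        ≤ ∑ i : Fin n, (ε / (2 * (n + 1)) + ∑ m ∈ (c i).support, ‖c i m‖ * δ) :=
          Finset.sum_le_sum fun i _ => step i
      _ = n * (ε / (2 * (n + 1))) + C * δ := by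
          rw [Finset.sum_add_distrib, Finset.sum_const, Finset.card_univ, Fintype.card_fin]
          simp [hC, Finset.sum_mul, nsmul_eq_mul]
      _ < ε := by
          have h1 : (n : ℝ) * (ε / (2 * (n + 1))) < ε / 2 := by
            rw [mul_div_assoc', div_lt_div_iff₀ (by positivity) (by norm_num)]
            have hn : (0 : ℝ) ≤ n := Nat.cast_nonneg n
            nlinarith
          have h2 : C * δ < ε / 2 := by
            rw [hδ, mul_div_assoc', div_lt_div_iff₀ (by positivity) (by norm_num)]
            nlinarith
          linarith
  refine le_antisymm ?_ (le_csInf hTne hTbdd)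
  by_contra hcon
  push_neg at hcon
  obtain ⟨r, hrT, hrlt⟩ := key (sInf T) hcon
  exact absurd (csInf_le hTbddBelow hrT) (not_le.mpr hrlt)
end
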